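/- (Kahn–Kalai–Linial / Talagrand) There exists a universal constant c > 0 such that for every n ≥ 1 and every f : {-1,1}^n → {-1,1}, Σ_{i=1}^n Inf_i(f)/log(e/Inf_i(f)) ≥ c·Var(f), where any term with Inf_i(f) = 0 is interpreted as 0. -/

import Mathlib

noncomputable section

/-- The real value `±1` associated with a Boolean coordinate (`true ↦ 1`, `false ↦ -1`). -/
def sgn (b : Bool) : ℝ := if b then 1 else -1

/-- Expectation over the uniform probability measure on the hypercube `{-1,1}^n`,
identified with `Fin n → Bool`. -/
def cubeExpect {n : ℕ} (f : (Fin n → Bool) → ℝ) : ℝ :=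
  (∑ x : Fin n → Bool, f x) / 2 ^ n

/-- The Fourier character `χ_S(x) = ∏_{i ∈ S} x_i`. -/
def chi {n : ℕ} (S : Finset (Fin n)) (x : Fin n → Bool) : ℝ :=
  ∏ i ∈ S, sgn (x i)

/-- The Fourier coefficient `f̂(S) = E[f(x) χ_S(x)]`. -/
def fourierCoef {n : ℕ} (f : (Fin n → Bool) → ℝ) (S : Finset (Fin n)) : ℝ :=
  cubeExpect fun x => f x * chi S x

/-- The noise operator `T_ρ f = Σ_S ρ^{|S|} f̂(S) χ_S` (with `0^0 = 1`). -/
def noiseOp {n : ℕ} (ρ : ℝ) (f : (Fin n → Bool) → ℝ) (x : Fin n → Bool) : ℝ :=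
  ∑ S : Finset (Fin n), ρ ^ S.card * fourierCoef f S * chi S x

/-- The normalized `ℓ_p` norm `‖f‖_p = (E |f|^p)^{1/p}`. -/
def cubeNorm {n : ℕ} (p : ℝ) (f : (Fin n → Bool) → ℝ) : ℝ :=
  (cubeExpect fun x => |f x| ^ p) ^ (1 / p)

/-- `x` with its `i`-th coordinate negated. -/
def flipAt {n : ℕ} (x : Fin n → Bool) (i : Fin n) : Fin n → Bool :=
  Function.update x i (!(x i))

/-- The Dirichlet form `D(f,g) = ½ E_{x,i}[(f(x) − f(x^{⊕i}))(g(x) − g(x^{⊕i}))]`,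
with `x` uniform on the cube and `i` uniform on the coordinates. -/
def dirichletForm {n : ℕ} (f g : (Fin n → Bool) → ℝ) : ℝ :=
  (1/2) * cubeExpect fun x =>
    (∑ i : Fin n, (f x - f (flipAt x i)) * (g x - g (flipAt x i))) / n

/-- The entropy `Ent(g) = E[g log g] − (E g) log (E g)` (with `0 log 0 = 0`,
as `Real.log 0 = 0`). -/
def cubeEntropy {n : ℕ} (g : (Fin n → Bool) → ℝ) : ℝ :=
  cubeExpect (fun x => g x * Real.log (g x)) - cubeExpect g * Real.log (cubeExpect g)

/-- The variance `Var(f) = E[f²] − (E f)²`. -/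
def cubeVar {n : ℕ} (f : (Fin n → Bool) → ℝ) : ℝ :=
  cubeExpect (fun x => f x ^ 2) - (cubeExpect f) ^ 2

/-- The influence of coordinate `i`: `Inf_i(f) = Σ_{S ∋ i} f̂(S)²`. -/
def influence {n : ℕ} (i : Fin n) (f : (Fin n → Bool) → ℝ) : ℝ :=
  ∑ S ∈ Finset.univ.filter (fun S : Finset (Fin n) => i ∈ S), fourierCoef f S ^ 2

/-!
With `D_i f(x) = (f(x) - f(x^{⊕i})) / 2`, Parseval gives `Var f = Σ_i Σ_S (D_i f)^(S)² / |S|`.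
For Boolean `f` the function `g = D_i f` takes values in `{-1, 0, 1}`, hence
`E g² = Inf_i f` and `‖g‖_{4/3} = (Inf_i f)^{3/4}`. Bonami's lemma `E (T_ρ h)⁴ ≤ (E h²)²`
(`ρ² ≤ 1/3`), combined with Cauchy–Schwarz, gives `Σ_S 4^{-|S|} ĝ(S)² ≤ (Inf_i f)^{3/2}`: a
function of small influence has little Fourier weight on low degrees. Splitting
`Σ_S ĝ(S)² / |S|` at degree `m ≈ log(e / Inf_i f) / 8` bounds it by
`12 Inf_i f / log(e / Inf_i f)`.
-/

open Finset Real

variable {n : ℕ}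

lemma sgn_mul_self (b : Bool) : sgn b * sgn b = 1 := by cases b <;> simp [sgn]

lemma sgn_not (b : Bool) : sgn (!b) = -sgn b := by cases b <;> simp [sgn]

lemma flipAt_apply_self (x : Fin n → Bool) (j : Fin n) : flipAt x j j = !x j := by
  simp [flipAt]

lemma flipAt_flipAt (x : Fin n → Bool) (j : Fin n) : flipAt (flipAt x j) j = x := by
  simp [flipAt]

lemma sum_flipAt (j : Fin n) (F : (Fin n → Bool) → ℝ) :
    ∑ x, F (flipAt x j) = ∑ x, F x :=
  Equiv.sum_comp (Function.Involutive.toPerm _ fun x => flipAt_flipAt x j) F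

lemma sum_eq_zero_of_flipAt_eq_neg {F : (Fin n → Bool) → ℝ} (j : Fin n)
    (hF : ∀ x, F (flipAt x j) = -F x) : ∑ x, F x = 0 := by
  have h := sum_flipAt j F
  simp only [hF, sum_neg_distrib] at h
  linarith

lemma chi_flipAt (S : Finset (Fin n)) (x : Fin n → Bool) (j : Fin n) :
    chi S (flipAt x j) = (if j ∈ S then -1 else 1) * chi S x := by
  have h : ∀ i ∈ S, sgn (flipAt x j i) = (if i = j then -1 else 1) * sgn (x i) := by
    intro i _
    rcases eq_or_ne i j with rfl | hij
    · simp [flipAt_apply_self, sgn_not]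
    · simp [flipAt, hij]
  rw [chi, prod_congr rfl h, prod_mul_distrib, prod_ite_eq' S j fun _ => (-1 : ℝ), chi]

lemma chi_insert {S : Finset (Fin n)} {j : Fin n} (hj : j ∉ S) (x : Fin n → Bool) :
    chi (insert j S) x = sgn (x j) * chi S x :=
  prod_insert hj

lemma cubeExpect_const (c : ℝ) : cubeExpect (fun _ : Fin n → Bool => c) = c := by
  simp [cubeExpect]

lemma cubeExpect_add (F H : (Fin n → Bool) → ℝ) :
    cubeExpect (fun x => F x + H x) = cubeExpect F + cubeExpect H := by
  simp only [cubeExpect, sum_add_distrib, add_div]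

lemma cubeExpect_const_mul (c : ℝ) (F : (Fin n → Bool) → ℝ) :
    cubeExpect (fun x => c * F x) = c * cubeExpect F := by
  simp only [cubeExpect, ← mul_sum, mul_div_assoc]

lemma cubeExpect_sum {ι : Type*} (s : Finset ι) (F : ι → (Fin n → Bool) → ℝ) :
    cubeExpect (fun x => ∑ k ∈ s, F k x) = ∑ k ∈ s, cubeExpect (F k) := by
  simp only [cubeExpect, ← sum_div]
  rw [sum_comm]

lemma cubeExpect_mono {F H : (Fin n → Bool) → ℝ} (h : ∀ x, F x ≤ H x) :
    cubeExpect F ≤ cubeExpect H :=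
  div_le_div_of_nonneg_right (sum_le_sum fun x _ => h x) (by positivity)

lemma cubeExpect_nonneg {F : (Fin n → Bool) → ℝ} (h : ∀ x, 0 ≤ F x) : 0 ≤ cubeExpect F := by
  simpa [cubeExpect_const] using cubeExpect_mono h

lemma cubeExpect_mul_sq_le (u v : (Fin n → Bool) → ℝ) :
    cubeExpect (fun x => u x * v x) ^ 2
      ≤ cubeExpect (fun x => u x ^ 2) * cubeExpect (fun x => v x ^ 2) := by
  simp only [cubeExpect, div_pow, div_mul_div_comm, ← sq]
  gcongr
  exact sum_mul_sq_le_sq_mul_sq _ _ _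

def walshSum (a : Finset (Fin n) → ℝ) (x : Fin n → Bool) : ℝ :=
  ∑ S, a S * chi S x

lemma sum_chi_mul_chi (x y : Fin n → Bool) :
    ∑ S, chi S y * chi S x = if y = x then 2 ^ n else 0 := by
  have hprod : ∑ S, chi S y * chi S x = ∏ i, (1 + sgn (y i) * sgn (x i)) := by
    rw [prod_one_add, powerset_univ]
    exact sum_congr rfl fun S _ => (prod_mul_distrib).symm
  rw [hprod]
  split_ifs with hyx
  · subst hyx
    simp [sgn_mul_self, one_add_one_eq_two]
  · obtain ⟨j, hj⟩ : ∃ j, y j ≠ x j := Function.ne_iff.mp hyx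
    refine prod_eq_zero (mem_univ j) ?_
    cases hy : y j <;> cases hx : x j <;> simp_all [sgn]

lemma walshSum_fourierCoef (f : (Fin n → Bool) → ℝ) : walshSum (fourierCoef f) = f := by
  funext x
  have h : walshSum (fourierCoef f) x = (∑ y, f y * ∑ S, chi S y * chi S x) / 2 ^ n := by
    simp only [walshSum, fourierCoef, cubeExpect, sum_div, mul_sum, sum_mul]
    rw [sum_comm]
    exact sum_congr rfl fun y _ => sum_congr rfl fun S _ => by ring
  simp [h, sum_chi_mul_chi]

lemma cubeExpect_mul_walshSum (F : (Fin n → Bool) → ℝ) (c : Finset (Fin n) → ℝ) :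
    cubeExpect (fun x => F x * walshSum c x) = ∑ S, c S * fourierCoef F S := by
  simp only [walshSum, mul_sum, cubeExpect_sum]
  refine sum_congr rfl fun S _ => ?_
  rw [fourierCoef, ← cubeExpect_const_mul]
  congr 1 with x
  ring

lemma cubeExpect_sq_eq_sum_fourierCoef_sq (f : (Fin n → Bool) → ℝ) :
    cubeExpect (fun x => f x ^ 2) = ∑ S, fourierCoef f S ^ 2 := by
  calc cubeExpect (fun x => f x ^ 2)
      = cubeExpect (fun x => f x * walshSum (fourierCoef f) x) := by
        simp only [walshSum_fourierCoef, sq]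
    _ = ∑ S, fourierCoef f S ^ 2 := by simp only [cubeExpect_mul_walshSum, sq]

lemma fourierCoef_empty (f : (Fin n → Bool) → ℝ) : fourierCoef f ∅ = cubeExpect f := by
  simp [fourierCoef, chi]

lemma cubeVar_eq_sum_fourierCoef_sq (f : (Fin n → Bool) → ℝ) :
    cubeVar f = ∑ S ∈ univ.erase ∅, fourierCoef f S ^ 2 := by
  rw [cubeVar, cubeExpect_sq_eq_sum_fourierCoef_sq, ← fourierCoef_empty,
    ← add_sum_erase univ _ (mem_univ ∅)]
  ring

lemma sum_eq_sum_powerset_erase_add_insert (j : Fin n) (F : Finset (Fin n) → ℝ) :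
    ∑ S, F S = ∑ S ∈ (univ.erase j).powerset, (F S + F (insert j S)) := by
  rw [sum_add_distrib, ← sum_powerset_insert (notMem_erase j univ), insert_erase (mem_univ j),
    powerset_univ]

lemma notMem_of_mem_powerset_erase {j : Fin n} {S : Finset (Fin n)}
    (hS : S ∈ (univ.erase j).powerset) : j ∉ S :=
  fun hj => notMem_erase j univ (mem_powerset.mp hS hj)

/-- The coefficients of `E_j f` in the splitting `f = E_j f + x_j ∂_j f` of `f = walshSum a` into
parts not depending on `x_j`; `shiftCoeffs j a` are those of `∂_j f`. -/
def restrictCoeffs (j : Fin n) (a : Finset (Fin n) → ℝ) (S : Finset (Fin n)) : ℝ :=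
  if j ∈ S then 0 else a S

def shiftCoeffs (j : Fin n) (a : Finset (Fin n) → ℝ) (S : Finset (Fin n)) : ℝ :=
  if j ∈ S then 0 else a (insert j S)

lemma walshSum_pow_card_mul_eq_add (ρ : ℝ) (j : Fin n) (a : Finset (Fin n) → ℝ)
    (x : Fin n → Bool) :
    walshSum (fun S => ρ ^ S.card * a S) x
      = walshSum (fun S => ρ ^ S.card * restrictCoeffs j a S) x
        + ρ * sgn (x j) * walshSum (fun S => ρ ^ S.card * shiftCoeffs j a S) x := by
  simp only [walshSum, sum_eq_sum_powerset_erase_add_insert j, mul_sum, ← sum_add_distrib]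
  refine sum_congr rfl fun S hS => ?_
  have hj := notMem_of_mem_powerset_erase hS
  simp only [restrictCoeffs, shiftCoeffs, hj, mem_insert_self, if_true, if_false,
    card_insert_of_notMem hj, chi_insert hj, insert_idem]
  ring

lemma sum_sq_eq_sum_restrictCoeffs_sq_add_sum_shiftCoeffs_sq (j : Fin n)
    (a : Finset (Fin n) → ℝ) :
    ∑ S, a S ^ 2 = ∑ S, restrictCoeffs j a S ^ 2 + ∑ S, shiftCoeffs j a S ^ 2 := by
  simp only [sum_eq_sum_powerset_erase_add_insert j, ← sum_add_distrib]
  refine sum_congr rfl fun S hS => ?_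
  have hj := notMem_of_mem_powerset_erase hS
  simp [restrictCoeffs, shiftCoeffs, hj]

lemma walshSum_flipAt {j : Fin n} {a : Finset (Fin n) → ℝ} (ha : ∀ S, j ∈ S → a S = 0)
    (x : Fin n → Bool) : walshSum a (flipAt x j) = walshSum a x := by
  refine sum_congr rfl fun S _ => ?_
  by_cases hj : j ∈ S
  · simp [ha S hj]
  · rw [chi_flipAt, if_neg hj, one_mul]

lemma cubeExpect_add_mul_sgn_pow_four {B C : (Fin n → Bool) → ℝ} {j : Fin n}
    (hB : ∀ x, B (flipAt x j) = B x) (hC : ∀ x, C (flipAt x j) = C x) (ρ : ℝ) :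
    cubeExpect (fun x => (B x + ρ * sgn (x j) * C x) ^ 4)
      = cubeExpect (fun x => B x ^ 4) + 6 * ρ ^ 2 * cubeExpect (fun x => B x ^ 2 * C x ^ 2)
        + ρ ^ 4 * cubeExpect (fun x => C x ^ 4) := by
  have hodd : cubeExpect
      (fun x => sgn (x j) * (4 * ρ * B x ^ 3 * C x + 4 * ρ ^ 3 * B x * C x ^ 3)) = 0 := by
    rw [cubeExpect, sum_eq_zero_of_flipAt_eq_neg j, zero_div]
    intro x
    rw [hB, hC, flipAt_apply_self, sgn_not]
    ring
  have hexpand : ∀ x, (B x + ρ * sgn (x j) * C x) ^ 4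
      = B x ^ 4 + 6 * ρ ^ 2 * (B x ^ 2 * C x ^ 2) + ρ ^ 4 * C x ^ 4
        + sgn (x j) * (4 * ρ * B x ^ 3 * C x + 4 * ρ ^ 3 * B x * C x ^ 3) := by
    intro x
    have hsq : sgn (x j) ^ 2 = 1 := by rw [sq, sgn_mul_self]
    linear_combination (6 * B x ^ 2 * ρ ^ 2 * C x ^ 2 + 4 * B x * ρ ^ 3 * C x ^ 3 * sgn (x j)
      + ρ ^ 4 * C x ^ 4 * (sgn (x j) ^ 2 + 1)) * hsq
  simp only [hexpand, cubeExpect_add, cubeExpect_const_mul, hodd, add_zero]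

lemma cubeExpect_add_mul_sgn_pow_four_le {B C : (Fin n → Bool) → ℝ} {j : Fin n}
    (hB : ∀ x, B (flipAt x j) = B x) (hC : ∀ x, C (flipAt x j) = C x) {ρ p q : ℝ}
    (hρ : ρ ^ 2 ≤ 1 / 3) (hp : 0 ≤ p) (hq : 0 ≤ q)
    (hBp : cubeExpect (fun x => B x ^ 4) ≤ p ^ 2)
    (hCq : cubeExpect (fun x => C x ^ 4) ≤ q ^ 2) :
    cubeExpect (fun x => (B x + ρ * sgn (x j) * C x) ^ 4) ≤ (p + q) ^ 2 := by
  have hC4 : 0 ≤ cubeExpect (fun x => C x ^ 4) := cubeExpect_nonneg fun x => by positivity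
  have hBC : cubeExpect (fun x => B x ^ 2 * C x ^ 2) ≤ p * q := by
    refine le_of_pow_le_pow_left₀ two_ne_zero (mul_nonneg hp hq) ?_
    calc cubeExpect (fun x => B x ^ 2 * C x ^ 2) ^ 2
        ≤ cubeExpect (fun x => (B x ^ 2) ^ 2) * cubeExpect (fun x => (C x ^ 2) ^ 2) :=
          cubeExpect_mul_sq_le _ _
      _ = cubeExpect (fun x => B x ^ 4) * cubeExpect (fun x => C x ^ 4) := by ring_nf
      _ ≤ p ^ 2 * q ^ 2 := mul_le_mul hBp hCq hC4 (by positivity)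
      _ = (p * q) ^ 2 := by ring
  rw [cubeExpect_add_mul_sgn_pow_four hB hC]
  nlinarith [mul_le_mul_of_nonneg_left hBC (by positivity : (0 : ℝ) ≤ 6 * ρ ^ 2),
    mul_le_mul hρ hρ (sq_nonneg ρ) (by norm_num), mul_nonneg hp hq,
    mul_le_mul_of_nonneg_left hCq (pow_two_nonneg (ρ ^ 2))]

lemma bonami_of_support {ρ : ℝ} (hρ : ρ ^ 2 ≤ 1 / 3) (J : Finset (Fin n)) :
    ∀ a : Finset (Fin n) → ℝ, (∀ S, ¬ S ⊆ J → a S = 0) →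
      cubeExpect (fun x => walshSum (fun S => ρ ^ S.card * a S) x ^ 4) ≤ (∑ S, a S ^ 2) ^ 2 := by
  induction J using Finset.induction_on with
  | empty =>
    intro a ha
    have ha' : ∀ S ∈ univ, S ≠ ∅ → a S = 0 := fun S _ hS => ha S (by simpa using hS)
    have hwalsh : ∀ x, walshSum (fun S => ρ ^ S.card * a S) x = a ∅ := fun x => by
      rw [walshSum, sum_eq_single ∅ (fun S hS hS' => by simp [ha' S hS hS']) (by simp)]
      simp [chi]
    rw [sum_eq_single ∅ (fun S hS hS' => by simp [ha' S hS hS']) (by simp)]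
    simp only [hwalsh, cubeExpect_const]
    exact le_of_eq (by ring)
  | @insert j J hjJ ih =>
    intro a ha
    have hsupp : ∀ S, ¬ S ⊆ J → j ∉ S → ¬ S ⊆ insert j J := fun S hS hjS h =>
      hS ((subset_insert_iff_of_notMem hjS).mp h)
    have hres : ∀ S, ¬ S ⊆ J → restrictCoeffs j a S = 0 := fun S hS => by
      unfold restrictCoeffs
      split_ifs with hjS
      exacts [rfl, ha S (hsupp S hS hjS)]
    have hshift : ∀ S, ¬ S ⊆ J → shiftCoeffs j a S = 0 := fun S hS => by
      unfold shiftCoeffs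
      split_ifs with hjS
      exacts [rfl, ha _ fun h => hsupp S hS hjS ((subset_insert j S).trans h)]
    simp only [walshSum_pow_card_mul_eq_add ρ j a,
      sum_sq_eq_sum_restrictCoeffs_sq_add_sum_shiftCoeffs_sq j a]
    refine cubeExpect_add_mul_sgn_pow_four_le (walshSum_flipAt ?_) (walshSum_flipAt ?_) hρ
      (sum_nonneg fun _ _ => sq_nonneg _) (sum_nonneg fun _ _ => sq_nonneg _)
      (ih _ hres) (ih _ hshift)
    all_goals intro S hS; simp [restrictCoeffs, shiftCoeffs, hS]

theorem bonami {ρ : ℝ} (hρ : ρ ^ 2 ≤ 1 / 3) (a : Finset (Fin n) → ℝ) :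
    cubeExpect (fun x => walshSum (fun S => ρ ^ S.card * a S) x ^ 4) ≤ (∑ S, a S ^ 2) ^ 2 :=
  bonami_of_support hρ univ a fun S hS => absurd (subset_univ S) hS

def discreteDeriv (i : Fin n) (f : (Fin n → Bool) → ℝ) (x : Fin n → Bool) : ℝ :=
  (f x - f (flipAt x i)) / 2

lemma fourierCoef_discreteDeriv (i : Fin n) (f : (Fin n → Bool) → ℝ) (S : Finset (Fin n)) :
    fourierCoef (discreteDeriv i f) S = if i ∈ S then fourierCoef f S else 0 := by
  have hflip :
      ∑ x, f (flipAt x i) * chi S x = (if i ∈ S then -1 else 1) * ∑ x, f x * chi S x := by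
    rw [← sum_flipAt i, mul_sum]
    exact sum_congr rfl fun x _ => by rw [flipAt_flipAt, chi_flipAt]; ring
  simp only [fourierCoef, cubeExpect, discreteDeriv, sub_div, sub_mul, sum_sub_distrib,
    div_mul_eq_mul_div, ← sum_div, hflip]
  split_ifs <;> ring

lemma influence_eq_cubeExpect_discreteDeriv_sq (i : Fin n) (f : (Fin n → Bool) → ℝ) :
    influence i f = cubeExpect (fun x => discreteDeriv i f x ^ 2) := by
  simp only [cubeExpect_sq_eq_sum_fourierCoef_sq, fourierCoef_discreteDeriv, influence,
    sum_filter, ite_pow, zero_pow two_ne_zero]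

lemma discreteDeriv_pow_three {f : (Fin n → Bool) → ℝ} (hf : ∀ x, f x = 1 ∨ f x = -1)
    (i : Fin n) (x : Fin n → Bool) : discreteDeriv i f x ^ 3 = discreteDeriv i f x := by
  rcases hf x with h1 | h1 <;> rcases hf (flipAt x i) with h2 | h2 <;>
    norm_num [discreteDeriv, h1, h2]

/-- The dual form `‖T_ρ g‖₂ ≤ ‖g‖_{4/3}` of Bonami's lemma, for `g` with
`‖g‖_{4/3}^{4/3} = E g²`. -/
theorem sq_sum_pow_card_mul_fourierCoef_sq_le {g : (Fin n → Bool) → ℝ}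
    (hg : ∀ x, g x ^ 3 = g x) {ρ : ℝ} (hρ : ρ ^ 2 ≤ 1 / 3) :
    (∑ S, (ρ ^ S.card * fourierCoef g S) ^ 2) ^ 2 ≤ cubeExpect (fun x => g x ^ 2) ^ 3 := by
  set a := cubeExpect (fun x => g x ^ 2)
  set X := ∑ S, (ρ ^ S.card * fourierCoef g S) ^ 2
  set h := walshSum (fun S => ρ ^ S.card * (ρ ^ S.card * fourierCoef g S))
  have hg4 : ∀ x, (g x ^ 2) ^ 2 = g x ^ 2 := fun x => by rw [← pow_mul, pow_succ, hg, ← sq]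
  have hgh : cubeExpect (fun x => g x * h x) = X := by
    rw [cubeExpect_mul_walshSum]
    exact sum_congr rfl fun S _ => by ring
  have hh4 : cubeExpect (fun x => h x ^ 4) ≤ X ^ 2 := bonami hρ _
  -- Cauchy–Schwarz for `g · (g² h)` and `g² · h²`, simplified by `g³ = g`
  have hcs₁ : X ^ 2 ≤ a * cubeExpect (fun x => g x ^ 2 * h x ^ 2) := by
    have := cubeExpect_mul_sq_le g (fun x => g x ^ 2 * h x)
    simp only [← mul_assoc, ← pow_succ', hg, mul_pow, hg4, hgh] at this
    exact this
  have hcs₂ :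
      cubeExpect (fun x => g x ^ 2 * h x ^ 2) ^ 2 ≤ a * cubeExpect (fun x => h x ^ 4) := by
    have := cubeExpect_mul_sq_le (g · ^ 2) (h · ^ 2)
    simp only [hg4, ← pow_mul] at this
    exact this
  have ha : 0 ≤ a := cubeExpect_nonneg fun x => sq_nonneg _
  have hX4 : X ^ 2 * X ^ 2 ≤ a ^ 3 * X ^ 2 := by
    calc X ^ 2 * X ^ 2 ≤ (a * cubeExpect (fun x => g x ^ 2 * h x ^ 2)) ^ 2 := by
          rw [← sq]; exact pow_le_pow_left₀ (sq_nonneg X) hcs₁ 2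
      _ ≤ a ^ 2 * (a * cubeExpect (fun x => h x ^ 4)) := by
          rw [mul_pow]; exact mul_le_mul_of_nonneg_left hcs₂ (sq_nonneg a)
      _ ≤ a ^ 3 * X ^ 2 := by
          nlinarith [mul_le_mul_of_nonneg_left hh4 (pow_nonneg ha 3)]
  rcases (sq_nonneg X).eq_or_lt with hX | hX
  · rw [← hX]; positivity
  · exact le_of_mul_le_mul_right hX4 hX

lemma one_div_le_pow_div_pow_add {b : ℝ} (hb : 1 ≤ b) (k m : ℕ) :
    (1 : ℝ) / k ≤ b ^ m / b ^ k + 1 / (m + 1) := by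
  have hpow : 0 ≤ b ^ m / b ^ k := by positivity
  rcases le_or_gt k m with hkm | hmk
  · have h1 : (1 : ℝ) / k ≤ 1 := by
      rcases k.eq_zero_or_pos with rfl | hk
      · simp
      · exact (div_le_one (by positivity)).mpr (by exact_mod_cast hk)
    have h2 : 1 ≤ b ^ m / b ^ k :=
      (one_le_div (by positivity)).mpr (pow_le_pow_right₀ hb hkm)
    linarith [one_div_nonneg.mpr (by positivity : (0 : ℝ) ≤ m + 1)]
  · have : (1 : ℝ) / k ≤ 1 / (m + 1) :=
      one_div_le_one_div_of_le (by positivity) (by exact_mod_cast hmk)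
    linarith

/-- The choice `m = ⌊L/8⌋` balances the low-degree bound `4^m X ≤ 4^m a^{3/2}` against the
high-degree bound `a/(m+1)`. -/
lemma four_pow_mul_add_div_le {a L X : ℝ} (ha : 0 < a) (hae : a < exp 1)
    (hL : L = log (exp 1 / a)) (hX0 : 0 ≤ X) (hX : X ^ 2 ≤ a ^ 3) :
    4 ^ ⌊L / 8⌋₊ * X + a / (⌊L / 8⌋₊ + 1) ≤ 12 * (a / L) := by
  subst hL
  set L := log (exp 1 / a)
  set m := ⌊L / 8⌋₊
  have hL : 0 < L := log_pos ((one_lt_div ha).mpr hae)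
  have ha_eq : a = exp (1 - L) := by
    rw [exp_sub, exp_log (by positivity), div_div_cancel₀ (exp_pos 1).ne']
  have hhigh : a / (m + 1) ≤ 8 * (a / L) := by
    rw [div_le_iff₀ (by positivity), mul_comm 8, mul_assoc, div_mul_eq_mul_div,
      le_div_iff₀ hL]
    nlinarith [Nat.lt_floor_add_one (L / 8)]
  have h4m : (4 : ℝ) ^ m ≤ exp (L / 4) := by
    have h4 : (4 : ℝ) ≤ exp 2 := by
      have := add_one_le_exp 1
      rw [show (2 : ℝ) = 1 + 1 by norm_num, exp_add]
      nlinarith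
    calc (4 : ℝ) ^ m ≤ exp 2 ^ m := pow_le_pow_left₀ (by norm_num) h4 m
      _ = exp (2 * m) := by rw [← exp_nat_mul, mul_comm]
      _ ≤ exp (L / 4) :=
          exp_le_exp.mpr (by linarith [Nat.floor_le (by positivity : 0 ≤ L / 8)])
  have hXle : X ≤ exp (3 * (1 - L) / 2) := by
    refine (le_abs_self X).trans (abs_le_of_sq_le_sq ?_ (exp_pos _).le)
    calc X ^ 2 ≤ a ^ 3 := hX
      _ = exp (3 * (1 - L) / 2) ^ 2 := by rw [ha_eq, ← exp_nat_mul, ← exp_nat_mul]; ring_nf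
  have hLexp : L * exp (1 / 2 - L / 4) ≤ 4 := by
    have := add_one_le_exp (L / 4 - 1 / 2)
    rw [show 1 / 2 - L / 4 = -(L / 4 - 1 / 2) by ring, exp_neg, ← div_eq_mul_inv,
      div_le_iff₀ (exp_pos _)]
    linarith
  have hlow : 4 ^ m * X ≤ 4 * (a / L) := by
    calc 4 ^ m * X ≤ exp (L / 4) * exp (3 * (1 - L) / 2) :=
          mul_le_mul h4m hXle hX0 (exp_pos _).le
      _ = a * exp (1 / 2 - L / 4) := by rw [ha_eq, ← exp_add, ← exp_add]; ring_nf
      _ ≤ 4 * (a / L) := by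
          rw [mul_div_assoc', le_div_iff₀ hL]
          nlinarith
  linarith

theorem sum_fourierCoef_sq_div_card_le {g : (Fin n → Bool) → ℝ} (hg : ∀ x, g x ^ 3 = g x) :
    ∑ S, fourierCoef g S ^ 2 / S.card
      ≤ 12 * (cubeExpect (fun x => g x ^ 2)
        / log (exp 1 / cubeExpect (fun x => g x ^ 2))) := by
  set a := cubeExpect (fun x => g x ^ 2)
  have hparseval : ∑ S, fourierCoef g S ^ 2 = a := (cubeExpect_sq_eq_sum_fourierCoef_sq g).symm
  rcases (cubeExpect_nonneg fun x => sq_nonneg (g x) : 0 ≤ a).eq_or_lt with ha | ha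
  · have hzero : ∀ S, fourierCoef g S ^ 2 = 0 := fun S =>
      (sum_eq_zero_iff_of_nonneg fun S _ => sq_nonneg _).mp (hparseval.trans ha.symm) S
        (mem_univ S)
    simp [hzero, show a = 0 from ha.symm]
  have hae : a < exp 1 := by
    have ha1 : a ≤ 1 := by
      refine (cubeExpect_mono fun x => ?_).trans (cubeExpect_const 1).le
      nlinarith [hg x, sq_nonneg (g x), sq_nonneg (g x ^ 2 - 1)]
    linarith [add_one_le_exp 1]
  set m := ⌊log (exp 1 / a) / 8⌋₊
  have hhalf : ∀ k : ℕ, ((1 / 2 : ℝ) ^ k) ^ 2 = 1 / 4 ^ k := fun k => by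
    rw [← pow_mul, mul_comm, pow_mul, one_div_pow, one_div_pow]; norm_num
  -- the `S = ∅` term is `0` since `x / 0 = 0`
  calc ∑ S, fourierCoef g S ^ 2 / S.card
      ≤ ∑ S, fourierCoef g S ^ 2 * ((4 : ℝ) ^ m / 4 ^ S.card + 1 / (m + 1)) :=
        sum_le_sum fun S _ => by
          rw [← mul_one_div]
          exact mul_le_mul_of_nonneg_left (one_div_le_pow_div_pow_add (by norm_num) _ _)
            (sq_nonneg _)
    _ = 4 ^ m * ∑ S, ((1 / 2) ^ S.card * fourierCoef g S) ^ 2 + a / (m + 1) := by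
        rw [← hparseval, mul_sum, sum_div, ← sum_add_distrib]
        refine sum_congr rfl fun S _ => ?_
        rw [mul_pow, hhalf]
        ring
    _ ≤ 12 * (a / log (exp 1 / a)) :=
        four_pow_mul_add_div_le ha hae rfl (sum_nonneg fun _ _ => sq_nonneg _)
          (sq_sum_pow_card_mul_fourierCoef_sq_le hg (by norm_num))

lemma cubeVar_eq_sum_sum_fourierCoef_discreteDeriv_sq_div_card (f : (Fin n → Bool) → ℝ) :
    cubeVar f = ∑ i, ∑ S, fourierCoef (discreteDeriv i f) S ^ 2 / S.card := by
  simp only [fourierCoef_discreteDeriv, ite_pow, zero_pow two_ne_zero, ite_div, zero_div]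
  rw [sum_comm]
  simp only [sum_ite_mem, univ_inter, sum_const, nsmul_eq_mul]
  rw [cubeVar_eq_sum_fourierCoef_sq, ← sum_erase (a := ∅) univ (by simp)]
  refine sum_congr rfl fun S hS => ?_
  rw [mul_div_cancel₀]
  exact Nat.cast_ne_zero.mpr
    (card_ne_zero.mpr (nonempty_iff_ne_empty.mpr (ne_of_mem_erase hS)))

/-- **Kahn–Kalai–Linial / Talagrand**: there is a universal constant `c > 0` such that for
every `n ≥ 1` and every `f : {-1,1}^n → {-1,1}`,
`Σ_i Inf_i(f)/log(e/Inf_i(f)) ≥ c·Var(f)`.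
(When `Inf_i(f) = 0`, the corresponding term equals `0`, consistent with the convention,
since in Lean `e/0 = 0`, `log 0 = 0`, and `0/0 = 0`.) -/
theorem kkl_talagrand :
    ∃ c : ℝ, 0 < c ∧
      ∀ n : ℕ, 1 ≤ n → ∀ f : (Fin n → Bool) → ℝ, (∀ x, f x = 1 ∨ f x = -1) →
        c * cubeVar f ≤
          ∑ i : Fin n, influence i f / Real.log (Real.exp 1 / influence i f) := by
  refine ⟨1 / 12, by norm_num, fun n _ f hf => ?_⟩
  rw [cubeVar_eq_sum_sum_fourierCoef_discreteDeriv_sq_div_card, mul_sum]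
  refine sum_le_sum fun i _ => ?_
  have hi := sum_fourierCoef_sq_div_card_le (discreteDeriv_pow_three hf i)
  rw [← influence_eq_cubeExpect_discreteDeriv_sq] at hi
  linarith
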